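/- arXiv:1503.09178 — 5 statements merged into one kernel-verified Lean document; each statement's English description precedes it below -/
import Mathlib

section
/- For complex numbers h_1,...,h_M and power P>0, the set of achievable values of d = sqrt(P/M) * Σ_{i=1}^M h_i e^{jθ_i} over all phase choices θ_i ∈ [0,2π) is exactly the annulus {d ∈ ℂ : r ≤ |d| ≤ R}, where R = sqrt(P/M) * Σ_i |h_i| and r = sqrt(P/M) * max(2 max_i |h_i| − Σ_i |h_i|, 0). -/
open Real

lemma unit_exp {v : ℂ} (hv : ‖v‖ = 1) :
    ∃ θ : ℝ, θ ∈ Set.Ico (0 : ℝ) (2 * π) ∧ Complex.exp ((θ : ℂ) * Complex.I) = v := by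
  have harg := Complex.arg_mem_Ioc v
  have hval : Complex.exp ((v.arg : ℂ) * Complex.I) = v := by
    have h1 : (‖v‖ : ℂ) * Complex.exp (v.arg * Complex.I) = v :=
      Complex.norm_mul_exp_arg_mul_I v
    rw [hv] at h1
    simpa using h1
  obtain ⟨hlo, hhi⟩ := harg
  have hpi : 0 < π := Real.pi_pos
  rcases le_or_gt 0 v.arg with hc | hc
  · exact ⟨v.arg, ⟨hc, by linarith⟩, hval⟩
  · refine ⟨v.arg + 2 * π, ⟨by linarith, by linarith⟩, ?_⟩
    push_cast
    rw [add_mul, Complex.exp_add, Complex.exp_two_pi_mul_I, mul_one, hval]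

lemma two_circle (a b ρ : ℝ) (ha : 0 ≤ a) (hb : 0 ≤ b) (h1 : |a - b| ≤ ρ) (h2 : ρ ≤ a + b) :
    ∃ z : ℂ, ‖z‖ = 1 ∧ ‖(a : ℂ) * z + b‖ = ρ := by
  have hρ : 0 ≤ ρ := le_trans (abs_nonneg _) h1
  rcases eq_or_lt_of_le ha with ha0 | ha0
  · refine ⟨1, by simp, ?_⟩
    have habs := abs_le.mp h1
    have : ρ = b := by rw [← ha0] at habs h2; simp at habs h2; linarith [habs.1, habs.2]
    simp [← ha0, this, Complex.norm_of_nonneg hb]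
    exact hb
  rcases eq_or_lt_of_le hb with hb0 | hb0
  · refine ⟨1, by simp, ?_⟩
    have habs := abs_le.mp h1
    have : ρ = a := by rw [← hb0] at habs h2; simp at habs h2; linarith [habs.1, habs.2]
    simp [← hb0, this, Complex.norm_of_nonneg ha]
    exact ha
  · set c : ℝ := (ρ ^ 2 - a ^ 2 - b ^ 2) / (2 * a * b) with hc
    have hab : 0 < 2 * a * b := by positivity
    have habs := abs_le.mp h1
    have hc1 : c ≤ 1 := by
      rw [div_le_one hab]
      nlinarith
    have hcm1 : -1 ≤ c := by
      rw [le_div_iff₀ hab]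
      nlinarith
    have hsq : 0 ≤ 1 - c ^ 2 := by nlinarith
    refine ⟨⟨c, Real.sqrt (1 - c ^ 2)⟩, ?_, ?_⟩
    · rw [Complex.norm_def, Complex.normSq_mk]
      rw [show c * c + Real.sqrt (1 - c ^ 2) * Real.sqrt (1 - c ^ 2) = 1 by
        rw [Real.mul_self_sqrt hsq]; ring]
      exact Real.sqrt_one
    · rw [Complex.norm_def]
      have : Complex.normSq ((a : ℂ) * ⟨c, Real.sqrt (1 - c ^ 2)⟩ + b) = ρ ^ 2 := by
        have hmul : (a : ℂ) * ⟨c, Real.sqrt (1 - c ^ 2)⟩ + b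
            = ⟨a * c + b, a * Real.sqrt (1 - c ^ 2)⟩ := by
          apply Complex.ext <;> simp [Complex.ext_iff, Complex.ofReal_re, Complex.ofReal_im]
        rw [hmul, Complex.normSq_mk]
        have hs := Real.sq_sqrt hsq
        have : c * (2 * a * b) = ρ ^ 2 - a ^ 2 - b ^ 2 := by
          rw [hc, div_mul_cancel₀ _ hab.ne']
        nlinarith
      rw [this]
      exact Real.sqrt_sq hρ

lemma key_lemma : ∀ (n : ℕ) (r : Fin n → ℝ), (∀ i, 0 ≤ r i) → ∀ ρ : ℝ, 0 ≤ ρ →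
    ρ ≤ ∑ i, r i → (∀ i, 2 * r i - ∑ j, r j ≤ ρ) →
    ∃ z : Fin n → ℂ, (∀ i, ‖z i‖ = 1) ∧ ∑ i, (r i : ℂ) * z i = (ρ : ℂ) := by
  intro n
  induction n with
  | zero =>
    intro r hr ρ hρ0 hρS _
    refine ⟨fun i => 1, fun i => i.elim0, ?_⟩
    simp at hρS ⊢
    have : ρ = 0 := le_antisymm hρS hρ0
    simp [this]
  | succ n ih =>
    intro r hr ρ hρ0 hρS h1
    set a : ℝ := r 0 with ha_def
    set r' : Fin n → ℝ := fun i => r i.succ with hr'_def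
    have ha : 0 ≤ a := hr 0
    have hr' : ∀ i, 0 ≤ r' i := fun i => hr i.succ
    have hsum : ∑ i, r i = a + ∑ i, r' i := Fin.sum_univ_succ r
    set S' : ℝ := ∑ i, r' i with hS'_def
    have hS'0 : 0 ≤ S' := Finset.sum_nonneg fun i _ => hr' i
    rcases Nat.eq_zero_or_pos n with hn | hn
    · subst hn
      have hSa : ∑ i, r i = a := by simp [hsum, hS'_def, ha_def]
      have h1' := h1 0
      rw [hSa] at h1' hρS
      have hρa : ρ = a := le_antisymm hρS (by linarith)
      refine ⟨fun _ => 1, fun _ => by simp, ?_⟩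
      rw [Fin.sum_univ_one]
      simp [hρa, ha_def]
    · have hne : (Finset.univ : Finset (Fin n)).Nonempty := ⟨⟨0, hn⟩, Finset.mem_univ _⟩
      set L' : ℝ := Finset.univ.sup' hne (fun i => 2 * r' i - S') with hL'
      set ρ' : ℝ := max |ρ - a| (max L' 0) with hρ'
      have hρ'0 : 0 ≤ ρ' := le_trans (le_max_right _ _) (le_max_right _ _)
      -- single ≤ sum
      have hsingle : ∀ i, r' i ≤ S' := fun i =>
        Finset.single_le_sum (fun j _ => hr' j) (Finset.mem_univ i)
      have hρ'S' : ρ' ≤ S' := by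
        apply max_le
        · rw [abs_le]
          constructor
          · have := h1 0
            rw [hsum] at this
            simp only [← ha_def] at this
            linarith
          · rw [hsum] at hρS; linarith
        · apply max_le _ hS'0
          apply Finset.sup'_le
          intro i _
          have := hsingle i
          linarith
      have hρ'lb : ∀ i, 2 * r' i - S' ≤ ρ' :=
        fun i => le_trans (Finset.le_sup' (fun i => 2 * r' i - S') (Finset.mem_univ i))
          (le_trans (le_max_left _ _) (le_max_right _ _))
      have hρ'ub : ρ' ≤ ρ + a := by
        apply max_le
        · rw [abs_le]; constructor <;> linarith
        · apply max_le _ (by linarith)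
          apply Finset.sup'_le
          intro i _
          have := h1 i.succ
          rw [hsum] at this
          have hri : r' i = r i.succ := rfl
          linarith
      have hρ'lb2 : |ρ - a| ≤ ρ' := le_max_left _ _
      obtain ⟨z', hz'u, hz's⟩ := ih r' hr' ρ' hρ'0 hρ'S' hρ'lb
      -- two-circle: achieve ρ from circle a and point ρ'
      have htc : |a - ρ'| ≤ ρ ∧ ρ ≤ a + ρ' := by
        have hh := abs_le.mp hρ'lb2
        constructor
        · rw [abs_le]; constructor <;> linarith
        · linarith
      obtain ⟨z, hzu, hzn⟩ := two_circle a ρ' ρ ha hρ'0 htc.1 htc.2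
      set w : ℂ := (a : ℂ) * z + (ρ' : ℂ) with hw
      have hwn : ‖w‖ = ρ := hzn
      obtain ⟨u, huu, huw⟩ : ∃ u : ℂ, ‖u‖ = 1 ∧ u * w = (ρ : ℂ) := by
        rcases eq_or_lt_of_le hρ0 with h0 | h0
        · refine ⟨1, by simp, ?_⟩
          have : w = 0 := by
            rw [← norm_eq_zero, hwn, ← h0]
          rw [this, ← h0]
          norm_num
        · have hw0 : w ≠ 0 := by
            intro hh; rw [hh, norm_zero] at hwn; linarith
          refine ⟨(ρ : ℂ) / w, ?_, by field_simp⟩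
          rw [norm_div, hwn, Complex.norm_real, Real.norm_eq_abs, abs_of_nonneg hρ0, div_self (ne_of_gt h0)]
      refine ⟨Fin.cons (u * z) (fun i => u * z' i), ?_, ?_⟩
      · intro i
        refine Fin.cases ?_ ?_ i
        · simp [norm_mul, huu, hzu]
        · intro j; simp [norm_mul, huu, hz'u j]
      · rw [Fin.sum_univ_succ]
        simp only [Fin.cons_zero, Fin.cons_succ]
        have : ∑ i : Fin n, (r i.succ : ℂ) * (u * z' i) = u * (ρ' : ℂ) := by
          rw [← hz's, Finset.mul_sum]
          apply Finset.sum_congr rfl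
          intro i _
          ring
        rw [this, ← huw, hw]
        push_cast
        ring

/-- The set of achievable noise-free received signals under constant-envelope
precoding is exactly the annulus with inner radius `√(P/M)·max(2‖h‖_∞ − ‖h‖₁, 0)`
and outer radius `√(P/M)·‖h‖₁`. -/
theorem ce_achievable_set_eq_annulus (M : ℕ) (hM : 0 < M) (h : Fin M → ℂ)
    (P : ℝ) (hP : 0 < P) :
    {d : ℂ | ∃ θ : Fin M → ℝ, (∀ i, θ i ∈ Set.Ico (0 : ℝ) (2 * π)) ∧
        d = (Real.sqrt (P / M) : ℂ) * ∑ i, h i * Complex.exp ((θ i : ℂ) * Complex.I)} =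
      {d : ℂ |
        Real.sqrt (P / M) *
            max (2 * (Finset.univ.sup' (Finset.univ_nonempty_iff.mpr ⟨⟨0, hM⟩⟩)
                fun i => ‖h i‖) - ∑ i, ‖h i‖) 0 ≤ ‖d‖ ∧
          ‖d‖ ≤ Real.sqrt (P / M) * ∑ i, ‖h i‖} := by
  have hc : 0 < Real.sqrt (P / M) := Real.sqrt_pos.mpr (div_pos hP (by exact_mod_cast hM))
  set c : ℝ := Real.sqrt (P / M) with hcdef
  set S : ℝ := ∑ i, ‖h i‖ with hSdef
  set m : ℝ := Finset.univ.sup' (Finset.univ_nonempty_iff.mpr ⟨⟨0, hM⟩⟩) (fun i => ‖h i‖)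
    with hmdef
  have hS0 : 0 ≤ S := Finset.sum_nonneg fun i _ => norm_nonneg _
  have hm_le : ∀ i, ‖h i‖ ≤ m := fun i => by
    rw [hmdef]; exact Finset.le_sup' (fun i => ‖h i‖) (Finset.mem_univ i)
  ext d
  simp only [Set.mem_setOf_eq]
  constructor
  · rintro ⟨θ, hθ, rfl⟩
    have hnorm : ∀ i, ‖h i * Complex.exp ((θ i : ℂ) * Complex.I)‖ = ‖h i‖ := by
      intro i
      rw [norm_mul, Complex.norm_exp_ofReal_mul_I, mul_one]
    have hcn : ‖((c : ℂ))‖ = c := by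
      rw [Complex.norm_real, Real.norm_eq_abs, abs_of_nonneg hc.le]
    rw [norm_mul, hcn]
    set T : ℂ := ∑ i, h i * Complex.exp ((θ i : ℂ) * Complex.I) with hT
    have hub : ‖T‖ ≤ S := by
      calc ‖T‖ ≤ ∑ i, ‖h i * Complex.exp ((θ i : ℂ) * Complex.I)‖ := norm_sum_le _ _
        _ = S := by rw [hSdef]; exact Finset.sum_congr rfl fun i _ => hnorm i
    have hlb : max (2 * m - S) 0 ≤ ‖T‖ := by
      apply max_le _ (norm_nonneg _)
      obtain ⟨k, _, hk⟩ := Finset.exists_mem_eq_sup' (Finset.univ_nonempty_iff.mpr ⟨⟨0, hM⟩⟩)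
        (fun i => ‖h i‖)
      have hsplit : T = h k * Complex.exp ((θ k : ℂ) * Complex.I) +
          ∑ i ∈ Finset.univ.erase k, h i * Complex.exp ((θ i : ℂ) * Complex.I) := by
        rw [hT, ← Finset.add_sum_erase _ _ (Finset.mem_univ k)]
      have h2 : ‖∑ i ∈ Finset.univ.erase k, h i * Complex.exp ((θ i : ℂ) * Complex.I)‖
          ≤ S - ‖h k‖ := by
        calc _ ≤ ∑ i ∈ Finset.univ.erase k, ‖h i * Complex.exp ((θ i : ℂ) * Complex.I)‖ :=
            norm_sum_le _ _
          _ = ∑ i ∈ Finset.univ.erase k, ‖h i‖ :=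
            Finset.sum_congr rfl fun i _ => hnorm i
          _ = S - ‖h k‖ := by
            rw [hSdef, ← Finset.add_sum_erase _ _ (Finset.mem_univ k)]; ring
      have h3 : ‖h k‖ - (S - ‖h k‖) ≤ ‖T‖ := by
        rw [hsplit]
        calc ‖h k‖ - (S - ‖h k‖)
            = ‖h k * Complex.exp ((θ k : ℂ) * Complex.I)‖ - (S - ‖h k‖) := by rw [hnorm k]
          _ ≤ ‖h k * Complex.exp ((θ k : ℂ) * Complex.I)‖ -
              ‖∑ i ∈ Finset.univ.erase k, h i * Complex.exp ((θ i : ℂ) * Complex.I)‖ := by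
            linarith
          _ ≤ _ := by
            have := norm_sub_norm_le (h k * Complex.exp ((θ k : ℂ) * Complex.I))
              (-(∑ i ∈ Finset.univ.erase k, h i * Complex.exp ((θ i : ℂ) * Complex.I)))
            rw [norm_neg, sub_neg_eq_add] at this
            linarith
      rw [hmdef, hk]
      linarith
    constructor
    · exact mul_le_mul_of_nonneg_left hlb hc.le
    · exact mul_le_mul_of_nonneg_left hub hc.le
  · rintro ⟨hlo, hhi⟩
    set ρ : ℝ := ‖d‖ / c with hρdef
    have hρ0 : 0 ≤ ρ := div_nonneg (norm_nonneg _) hc.le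
    have hdρ : ‖d‖ = c * ρ := by rw [hρdef, mul_div_cancel₀ _ hc.ne']
    have hρS : ρ ≤ S := by
      rw [hρdef, div_le_iff₀ hc]
      linarith [hhi]
    have hρm : max (2 * m - S) 0 ≤ ρ := by
      rw [hρdef, le_div_iff₀ hc]
      linarith [hlo]
    have hρlb : ∀ i, 2 * ‖h i‖ - S ≤ ρ := by
      intro i
      have := hm_le i
      have := le_trans (le_max_left (2 * m - S) 0) hρm
      linarith
    obtain ⟨z, hzu, hzs⟩ := key_lemma M (fun i => ‖h i‖) (fun i => norm_nonneg _) ρ hρ0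
      (by rw [← hSdef]; exact hρS) (by rw [← hSdef] at *; exact hρlb)
    obtain ⟨u, huu, huρ⟩ : ∃ u : ℂ, ‖u‖ = 1 ∧ (c : ℂ) * ((ρ : ℂ) * u) = d := by
      rcases eq_or_ne d 0 with hd0 | hd0
      · have : ρ = 0 := by rw [hρdef, hd0, norm_zero, zero_div]
        exact ⟨1, by simp, by simp [this, hd0]⟩
      · have hρpos : 0 < ρ := by
          rcases eq_or_lt_of_le hρ0 with h0 | h0
          · exfalso; apply hd0; rw [← norm_eq_zero, hdρ, ← h0, mul_zero]
          · exact h0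
        refine ⟨d / ((c : ℂ) * ρ), ?_, ?_⟩
        · rw [norm_div, norm_mul, Complex.norm_real, Complex.norm_real, Real.norm_eq_abs,
            Real.norm_eq_abs, abs_of_nonneg hc.le, abs_of_nonneg hρ0, hdρ, div_self]
          positivity
        · have hne : (c : ℂ) * (ρ : ℂ) ≠ 0 := by
            apply mul_ne_zero <;> simp [Complex.ofReal_ne_zero] <;> positivity
          rw [← mul_assoc, mul_div_cancel₀ _ hne]
    -- construct phases
    have hv : ∀ i, ∃ w : ℂ, ‖w‖ = 1 ∧ h i * w = (‖h i‖ : ℂ) * z i * u := by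
      intro i
      rcases eq_or_ne (h i) 0 with h0 | h0
      · exact ⟨1, by simp, by simp [h0]⟩
      · refine ⟨(‖h i‖ : ℂ) * z i * u / h i, ?_, by field_simp⟩
        rw [norm_div, norm_mul, norm_mul, Complex.norm_real, Real.norm_eq_abs,
          abs_of_nonneg (norm_nonneg _), hzu i, huu, mul_one, mul_one, div_self]
        simpa using h0
    choose w hwu hwe using hv
    have hexp : ∀ i, ∃ θ : ℝ, θ ∈ Set.Ico (0 : ℝ) (2 * π) ∧
        Complex.exp ((θ : ℂ) * Complex.I) = w i := fun i => unit_exp (hwu i)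
    choose θ hθm hθe using hexp
    refine ⟨θ, hθm, ?_⟩
    have : ∑ i, h i * Complex.exp ((θ i : ℂ) * Complex.I) = (ρ : ℂ) * u := by
      calc ∑ i, h i * Complex.exp ((θ i : ℂ) * Complex.I)
          = ∑ i, (‖h i‖ : ℂ) * z i * u := by
            apply Finset.sum_congr rfl
            intro i _
            rw [hθe i, hwe i]
        _ = (∑ i, (‖h i‖ : ℂ) * z i) * u := by rw [Finset.sum_mul]
        _ = (ρ : ℂ) * u := by rw [hzs]
    rw [this, huρ]
end

section
/- Let h_1, h_2 be i.i.d. standard circularly symmetric complex Gaussian random variables, R = |h_1| + |h_2|, and r = | |h_1| − |h_2| |. Then for x ∈ [0,1], Prob(r/R ≤ x) = 2x/(1+x²). -/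
open MeasureTheory Real Set
open scoped ENNReal

noncomputable def expd : ℝ → ℝ≥0∞ := fun t => ENNReal.ofReal (if 0 ≤ t then Real.exp (-t) else 0)

lemma expd_meas : Measurable expd := by
  apply Measurable.ennreal_ofReal
  exact Measurable.ite measurableSet_Ici (by fun_prop) measurable_const

lemma int_exp_mul {k : ℝ} (hk : 0 < k) : ∫ u in Ioi (0:ℝ), Real.exp (-(k*u)) = k⁻¹ := by
  have h := integral_comp_mul_left_Ioi (fun y => Real.exp (-y)) 0 hk
  simp only [mul_zero, integral_exp_neg_Ioi, neg_zero, Real.exp_zero, smul_eq_mul, mul_one] at h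
  exact h

lemma exp_icc_measure {a b : ℝ} (ha : 0 ≤ a) (hab : a ≤ b) :
    (volume.withDensity expd) (Icc a b) = ENNReal.ofReal (Real.exp (-a) - Real.exp (-b)) := by
  rw [withDensity_apply _ measurableSet_Icc]
  have h1 : ∫⁻ t in Icc a b, expd t = ∫⁻ t in Icc a b, ENNReal.ofReal (Real.exp (-t)) := by
    apply setLIntegral_congr_fun measurableSet_Icc
    exact fun t ht => by simp [expd, if_pos (ha.trans ht.1)]
  rw [h1]
  rw [← ofReal_integral_eq_lintegral_ofReal]
  · congr 1
    rw [integral_Icc_eq_integral_Ioc, ← intervalIntegral.integral_of_le hab,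
      intervalIntegral.integral_comp_neg (fun t => Real.exp t), integral_exp]
  · exact (continuous_exp.comp continuous_neg).integrableOn_Icc
  · exact ae_of_all _ fun t => (Real.exp_pos _).le

lemma exp_neg_lt : (volume.withDensity expd) (Iio 0) = 0 := by
  rw [withDensity_apply _ measurableSet_Iio]
  rw [setLIntegral_congr_fun (g := fun _ => 0) measurableSet_Iio
    (fun t (ht : t < 0) => by simp [expd, not_le.2 ht])]
  simp

lemma cond_iff {x u v : ℝ} (hx0 : 0 ≤ x) (hx1 : x < 1) (hu : 0 ≤ u) (hv : 0 ≤ v) :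
    |Real.sqrt u - Real.sqrt v| / (Real.sqrt u + Real.sqrt v) ≤ x ↔
      ((1-x)/(1+x))^2 * u ≤ v ∧ ((1-x)/(1+x))^2 * v ≤ u := by
  have h1x : (0:ℝ) < 1 + x := by linarith
  set c : ℝ := (1-x)/(1+x) with hcdef
  have hc : 0 < c := div_pos (by linarith) h1x
  set a := Real.sqrt u with hadef
  set b := Real.sqrt v with hbdef
  have ha : 0 ≤ a := Real.sqrt_nonneg u
  have hb : 0 ≤ b := Real.sqrt_nonneg v
  have hua : a^2 = u := Real.sq_sqrt hu
  have hvb : b^2 = v := Real.sq_sqrt hv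
  have e1 : (c^2 * u ≤ v) ↔ c * a ≤ b := by
    rw [← hua, ← hvb, show c^2 * a^2 = (c*a)^2 from by ring]
    exact pow_le_pow_iff_left₀ (mul_nonneg hc.le ha) hb two_ne_zero
  have e2 : (c^2 * v ≤ u) ↔ c * b ≤ a := by
    rw [← hua, ← hvb, show c^2 * b^2 = (c*b)^2 from by ring]
    exact pow_le_pow_iff_left₀ (mul_nonneg hc.le hb) ha two_ne_zero
  rw [e1, e2]
  rcases (add_nonneg ha hb).eq_or_lt with h | h
  · have ha0 : a = 0 := by linarith
    have hb0 : b = 0 := by linarith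
    simp [ha0, hb0, hx0]
  · rw [div_le_iff₀ h, abs_le,
      show c * a = (1-x)*a/(1+x) from by rw [hcdef]; ring,
      show c * b = (1-x)*b/(1+x) from by rw [hcdef]; ring,
      div_le_iff₀ h1x, div_le_iff₀ h1x]
    constructor <;> rintro ⟨h1, h2⟩ <;> constructor <;> linarith

/-- For `M = 2` i.i.d. Rayleigh fading (equivalently, `U = |h₁|²`, `V = |h₂|²` i.i.d.
Exponential(1)), the CDF of the annulus ratio `r/R = |√U − √V|/(√U + √V)` is
`x ↦ 2x/(1 + x²)` on `[0,1]`. -/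
theorem ce_ratio_cdf {Ω : Type*} [MeasurableSpace Ω] (ℙ : Measure Ω)
    [IsProbabilityMeasure ℙ] (U V : Ω → ℝ) (hUm : Measurable U) (hVm : Measurable V)
    (hindep : ProbabilityTheory.IndepFun U V ℙ)
    (hU : ℙ.map U = volume.withDensity
      (fun t => ENNReal.ofReal (if 0 ≤ t then Real.exp (-t) else 0)))
    (hV : ℙ.map V = volume.withDensity
      (fun t => ENNReal.ofReal (if 0 ≤ t then Real.exp (-t) else 0)))
    (x : ℝ) (hx : x ∈ Set.Icc (0 : ℝ) 1) :
    ℙ {ω | |Real.sqrt (U ω) - Real.sqrt (V ω)| / (Real.sqrt (U ω) + Real.sqrt (V ω)) ≤ x}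
      = ENNReal.ofReal (2 * x / (1 + x ^ 2)) := by
  obtain ⟨hx0, hx1⟩ := hx
  rcases hx1.lt_or_eq with hx1' | hx1'
  swap
  · -- x = 1
    subst hx1'
    have hset : {ω | |Real.sqrt (U ω) - Real.sqrt (V ω)| /
        (Real.sqrt (U ω) + Real.sqrt (V ω)) ≤ (1:ℝ)} = univ := by
      ext ω
      simp only [mem_setOf_eq, mem_univ, iff_true]
      have ha := Real.sqrt_nonneg (U ω)
      have hb := Real.sqrt_nonneg (V ω)
      exact div_le_one_of_le₀ (abs_le.2 ⟨by linarith, by linarith⟩) (by linarith)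
    rw [hset, measure_univ]
    norm_num
  -- main case x < 1
  set μ : Measure ℝ := volume.withDensity expd with hμdef
  have hUμ : ℙ.map U = μ := hU
  have hVμ : ℙ.map V = μ := hV
  have hprob : IsProbabilityMeasure μ := hUμ ▸ Measure.isProbabilityMeasure_map hUm.aemeasurable
  have hgm : Measurable fun p : ℝ × ℝ =>
      |Real.sqrt p.1 - Real.sqrt p.2| / (Real.sqrt p.1 + Real.sqrt p.2) := by
    fun_prop
  set S : Set (ℝ × ℝ) :=
    {p | |Real.sqrt p.1 - Real.sqrt p.2| / (Real.sqrt p.1 + Real.sqrt p.2) ≤ x} with hSdef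
  have hSm : MeasurableSet S := measurableSet_le hgm measurable_const
  have hpair : ℙ.map (fun ω => (U ω, V ω)) = μ.prod μ := by
    rw [hμdef]
    rw [show volume.withDensity expd = ℙ.map U from hUμ.symm]
    nth_rewrite 2 [show (ℙ.map U) = ℙ.map V from hUμ.trans hVμ.symm]
    exact (ProbabilityTheory.indepFun_iff_map_prod_eq_prod_map_map
      hUm.aemeasurable hVm.aemeasurable).mp hindep
  have key : ℙ {ω | |Real.sqrt (U ω) - Real.sqrt (V ω)| /
        (Real.sqrt (U ω) + Real.sqrt (V ω)) ≤ x} = (μ.prod μ) S := by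
    rw [← hpair, Measure.map_apply (hUm.prodMk hVm) hSm]
    rfl
  rw [key]
  set c : ℝ := (1-x)/(1+x) with hcdef
  have h1x : (0:ℝ) < 1 + x := by linarith
  have hc : 0 < c := div_pos (by linarith) h1x
  have hc1 : c ≤ 1 := by rw [hcdef, div_le_one h1x]; linarith
  have hae : ∀ᵐ u ∂μ, 0 ≤ u := by
    rw [ae_iff]
    have hs : {u : ℝ | ¬ 0 ≤ u} = Iio 0 := by ext u; simp [not_le]
    rw [hs]; exact exp_neg_lt
  have hsec : ∀ u : ℝ, 0 ≤ u → μ (Prod.mk u ⁻¹' S)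
      = ENNReal.ofReal (Real.exp (-(c^2*u)) - Real.exp (-(u/c^2))) := by
    intro u hu
    have hset : μ (Prod.mk u ⁻¹' S) = μ (Icc (c^2*u) (u/c^2)) := by
      apply measure_congr
      rw [Filter.eventuallyEq_set]
      filter_upwards [hae] with v hv
      simp only [hSdef, mem_preimage, mem_setOf_eq, mem_Icc]
      rw [cond_iff hx0 hx1' hu hv, hcdef]
      constructor
      · rintro ⟨h1, h2⟩
        exact ⟨h1, by rw [le_div_iff₀ (by positivity)]; linarith⟩
      · rintro ⟨h1, h2⟩
        refine ⟨h1, ?_⟩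
        rw [le_div_iff₀ (by positivity)] at h2; linarith
    have hle : c^2*u ≤ u/c^2 := by
      have h1 : c^2 ≤ 1 := by nlinarith
      have h2 : c^2 * u ≤ u := by nlinarith
      have h3 : u ≤ u / c^2 := by rw [le_div_iff₀ (by positivity)]; nlinarith
      linarith
    rw [hset, exp_icc_measure (by positivity) hle]
  have hGm : Measurable fun u : ℝ =>
      ENNReal.ofReal (Real.exp (-(c^2*u)) - Real.exp (-(u/c^2))) := by fun_prop
  have step1 : (μ.prod μ) S
      = ∫⁻ u, ENNReal.ofReal (Real.exp (-(c^2*u)) - Real.exp (-(u/c^2))) ∂μ := by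
    rw [Measure.prod_apply hSm]
    apply lintegral_congr_ae
    filter_upwards [hae] with u hu
    exact hsec u hu
  rw [step1, hμdef, lintegral_withDensity_eq_lintegral_mul _ expd_meas hGm]
  have hind : ∀ u : ℝ, (expd * fun u =>
        ENNReal.ofReal (Real.exp (-(c^2*u)) - Real.exp (-(u/c^2)))) u
      = (Ici (0:ℝ)).indicator (fun u =>
        ENNReal.ofReal ((Real.exp (-(c^2*u)) - Real.exp (-(u/c^2))) * Real.exp (-u))) u := by
    intro u
    by_cases hu : 0 ≤ u
    · simp only [Pi.mul_apply, expd, if_pos hu, indicator_of_mem (mem_Ici.2 hu)]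
      rw [mul_comm (Real.exp (-(c^2*u)) - Real.exp (-(u/c^2))),
        ENNReal.ofReal_mul (Real.exp_pos _).le]
    · simp only [Pi.mul_apply, expd, if_neg hu,
        indicator_of_notMem (fun h => hu (mem_Ici.1 h))]
      simp
  rw [lintegral_congr hind, lintegral_indicator measurableSet_Ici _]
  have hfeq : ∀ u : ℝ, (Real.exp (-(c^2*u)) - Real.exp (-(u/c^2))) * Real.exp (-u)
      = Real.exp (-((1+c^2)*u)) - Real.exp (-((1+(c^2)⁻¹)*u)) := by
    intro u
    rw [sub_mul, ← Real.exp_add, ← Real.exp_add]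
    congr 1 <;> [skip; congr 1] <;> ring_nf
  have hi1 : IntegrableOn (fun u : ℝ => Real.exp (-((1+c^2)*u))) (Ioi 0) := by
    simpa only [neg_mul] using exp_neg_integrableOn_Ioi 0 (by positivity : (0:ℝ) < 1 + c^2)
  have hi2 : IntegrableOn (fun u : ℝ => Real.exp (-((1+(c^2)⁻¹)*u))) (Ioi 0) := by
    simpa only [neg_mul] using exp_neg_integrableOn_Ioi 0 (by positivity : (0:ℝ) < 1 + (c^2)⁻¹)
  have hInt : IntegrableOn (fun u : ℝ =>
      (Real.exp (-(c^2*u)) - Real.exp (-(u/c^2))) * Real.exp (-u)) (Ici 0) := by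
    rw [show (fun u : ℝ => (Real.exp (-(c^2*u)) - Real.exp (-(u/c^2))) * Real.exp (-u))
      = fun u => Real.exp (-((1+c^2)*u)) - Real.exp (-((1+(c^2)⁻¹)*u)) from funext hfeq,
      integrableOn_Ici_iff_integrableOn_Ioi]
    exact hi1.sub hi2
  have hnn : 0 ≤ᵐ[volume.restrict (Ici (0:ℝ))] fun u =>
      (Real.exp (-(c^2*u)) - Real.exp (-(u/c^2))) * Real.exp (-u) := by
    refine (ae_restrict_iff' measurableSet_Ici).2 (ae_of_all _ fun u hu => ?_)
    have h1 : c^2 ≤ 1 := by nlinarith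
    have hle : c^2*u ≤ u/c^2 := by
      have h2 : c^2 * u ≤ u := by nlinarith [mem_Ici.1 hu]
      have h3 : u ≤ u / c^2 := by
        rw [le_div_iff₀ (by positivity)]; nlinarith [mem_Ici.1 hu]
      linarith
    have hexp : Real.exp (-(u/c^2)) ≤ Real.exp (-(c^2*u)) := Real.exp_le_exp.2 (by linarith)
    exact mul_nonneg (by linarith) (Real.exp_pos _).le
  rw [← ofReal_integral_eq_lintegral_ofReal hInt hnn]
  have hval : ∫ u in Ici (0:ℝ), (Real.exp (-(c^2*u)) - Real.exp (-(u/c^2))) * Real.exp (-u)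
      = (1+c^2)⁻¹ - (1+(c^2)⁻¹)⁻¹ := by
    rw [integral_Ici_eq_integral_Ioi,
      show (fun u : ℝ => (Real.exp (-(c^2*u)) - Real.exp (-(u/c^2))) * Real.exp (-u))
        = fun u => Real.exp (-((1+c^2)*u)) - Real.exp (-((1+(c^2)⁻¹)*u)) from funext hfeq]
    rw [integral_sub hi1 hi2, int_exp_mul (by positivity : (0:ℝ) < 1 + c^2),
      int_exp_mul (by positivity : (0:ℝ) < 1 + (c^2)⁻¹)]
  rw [hval]
  congr 1
  rw [hcdef]
  have hx2 : (0:ℝ) < 1 + x^2 := by positivity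
  have h1mx : (0:ℝ) < 1 - x := by linarith
  field_simp
  ring
end

section
/- Let h_1, h_2 be i.i.d. standard circularly symmetric complex Gaussian random variables. Then Prob( ||h_1|−|h_2|| / (|h_1|+|h_2|) > 1/3 ) = 2/5. -/
open MeasureTheory

noncomputable def expDens : ℝ → ENNReal :=
  fun t => ENNReal.ofReal (if 0 ≤ t then Real.exp (-t) else 0)

noncomputable def expM : Measure ℝ := volume.withDensity expDens

instance : SFinite expM := by unfold expM; infer_instance

lemma expDens_meas : Measurable expDens := by
  apply Measurable.ennreal_ofReal
  exact Measurable.ite measurableSet_Ici (Real.measurable_exp.comp measurable_neg)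
    measurable_const

lemma expM_Ioi {a : ℝ} (ha : 0 ≤ a) : expM (Set.Ioi a) = ENNReal.ofReal (Real.exp (-a)) := by
  rw [expM, withDensity_apply _ measurableSet_Ioi]
  rw [setLIntegral_congr_fun (g := fun t => ENNReal.ofReal (Real.exp (-t))) measurableSet_Ioi
    (fun t (ht : a < t) => by
      simp [expDens, if_pos (le_trans ha ht.le)])]
  rw [← ofReal_integral_eq_lintegral_ofReal
    (by simpa using (exp_neg_integrableOn_Ioi a one_pos).integrable)
    (ae_of_all _ fun x => (Real.exp_pos _).le), integral_exp_neg_Ioi]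

lemma expM_Iio_zero : expM (Set.Iio 0) = 0 := by
  rw [expM, withDensity_apply _ measurableSet_Iio]
  rw [setLIntegral_congr_fun (g := fun _ => (0:ENNReal)) measurableSet_Iio
    (fun t (ht : t < 0) => by
      simp [expDens, if_neg (not_le.2 ht)])]
  simp

lemma exp_integral_five : ∫ x in Set.Ioi (0:ℝ), Real.exp (-(5*x)) = 1/5 := by
  have h := integral_comp_mul_left_Ioi (fun y => Real.exp (-y)) 0 (by norm_num : (0:ℝ) < 5)
  simp only [mul_zero] at h
  rw [h, integral_exp_neg_Ioi, neg_zero, Real.exp_zero, smul_eq_mul, mul_one]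
  norm_num

lemma aux_prob {Ω : Type*} [MeasurableSpace Ω] (ℙ : Measure Ω) [IsProbabilityMeasure ℙ]
    (X Y : Ω → ℝ) (hX : Measurable X) (hY : Measurable Y)
    (hindep : ProbabilityTheory.IndepFun X Y ℙ)
    (hmX : ℙ.map X = expM) (hmY : ℙ.map Y = expM) :
    ℙ {ω | 4 * X ω < Y ω} = ENNReal.ofReal (1/5) := by
  have hs : MeasurableSet {p : ℝ × ℝ | 4 * p.1 < p.2} :=
    measurableSet_lt (measurable_fst.const_mul 4) measurable_snd
  have hmap : ℙ.map (fun ω => (X ω, Y ω)) = expM.prod expM :=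
    ((ProbabilityTheory.indepFun_iff_map_prod_eq_prod_map_map hX.aemeasurable
      hY.aemeasurable).mp hindep).trans (by rw [hmX, hmY])
  have hpre : {ω | 4 * X ω < Y ω} = (fun ω => (X ω, Y ω)) ⁻¹' {p | 4 * p.1 < p.2} := rfl
  rw [hpre, ← Measure.map_apply (hX.prodMk hY) hs, hmap, Measure.prod_apply hs]
  have hslice : ∀ x : ℝ, (Prod.mk x ⁻¹' {p : ℝ × ℝ | 4 * p.1 < p.2}) = Set.Ioi (4*x) :=
    fun x => rfl
  simp_rw [hslice]
  rw [expM, lintegral_withDensity_eq_lintegral_mul_non_measurable _ expDens_meas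
    (ae_of_all _ fun x => ENNReal.ofReal_lt_top)]
  have hne : ∀ᵐ x : ℝ, x ≠ 0 := by
    rw [ae_iff]
    simp only [ne_eq, not_not, Set.setOf_eq_eq_singleton]
    exact measure_singleton 0
  have hcongr : ∀ᵐ x : ℝ, (expDens * fun x => (volume.withDensity expDens) (Set.Ioi (4*x))) x
      = (Set.Ioi (0:ℝ)).indicator (fun x => ENNReal.ofReal (Real.exp (-(5*x)))) x := by
    filter_upwards [hne] with x hx
    rcases lt_or_gt_of_ne hx with hneg | hpos
    · have : expDens x = 0 := by simp [expDens, if_neg (not_le.2 hneg)]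
      simp [this, Set.indicator_of_notMem (by simpa using hneg.le : x ∉ Set.Ioi (0:ℝ))]
    · rw [Set.indicator_of_mem (by simpa using hpos : x ∈ Set.Ioi (0:ℝ))]
      have h4 : (volume.withDensity expDens) (Set.Ioi (4*x)) = ENNReal.ofReal (Real.exp (-(4*x))) :=
        expM_Ioi (by linarith)
      simp only [Pi.mul_apply, h4, expDens, if_pos hpos.le]
      rw [← ENNReal.ofReal_mul (Real.exp_nonneg _), ← Real.exp_add]
      ring_nf
  rw [lintegral_congr_ae hcongr, lintegral_indicator measurableSet_Ioi]
  rw [← ofReal_integral_eq_lintegral_ofReal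
    (by simpa [neg_mul] using (exp_neg_integrableOn_Ioi 0 (by norm_num : (0:ℝ) < 5)).integrable)
    (ae_of_all _ fun x => (Real.exp_pos _).le)]
  rw [exp_integral_five]

lemma ratio_iff {u v : ℝ} (hu : 0 ≤ u) (hv : 0 ≤ v) :
    1/3 < |Real.sqrt u - Real.sqrt v| / (Real.sqrt u + Real.sqrt v)
      ↔ (4 * v < u ∨ 4 * u < v) := by
  have sqrt4 : Real.sqrt 4 = 2 := by
    rw [show (4:ℝ) = 2^2 by norm_num, Real.sqrt_sq (by norm_num : (0:ℝ) ≤ 2)]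
  have ha : 0 ≤ Real.sqrt u := Real.sqrt_nonneg u
  have hb : 0 ≤ Real.sqrt v := Real.sqrt_nonneg v
  have h4v : 4 * v < u ↔ 2 * Real.sqrt v < Real.sqrt u := by
    rw [show (2:ℝ) * Real.sqrt v = Real.sqrt (4*v) by
      rw [Real.sqrt_mul (by norm_num) v, sqrt4]]
    exact (Real.sqrt_lt_sqrt_iff (by positivity)).symm
  have h4u : 4 * u < v ↔ 2 * Real.sqrt u < Real.sqrt v := by
    rw [show (2:ℝ) * Real.sqrt u = Real.sqrt (4*u) by
      rw [Real.sqrt_mul (by norm_num) u, sqrt4]]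
    exact (Real.sqrt_lt_sqrt_iff (by positivity)).symm
  rw [h4v, h4u]
  set a := Real.sqrt u
  set b := Real.sqrt v
  constructor
  · intro h
    rcases eq_or_lt_of_le (add_nonneg ha hb) with h0 | hab
    · rw [← h0, div_zero] at h; norm_num at h
    rw [lt_div_iff₀ hab] at h
    rcases le_total a b with hle | hle
    · right; rw [abs_of_nonpos (sub_nonpos.2 hle)] at h; linarith
    · left; rw [abs_of_nonneg (sub_nonneg.2 hle)] at h; linarith
  · intro h
    rcases h with h | h
    · have hab : 0 < a + b := by linarith
      rw [lt_div_iff₀ hab, abs_of_nonneg (by linarith : (0:ℝ) ≤ a - b)]; linarith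
    · have hab : 0 < a + b := by linarith
      rw [lt_div_iff₀ hab, abs_of_nonpos (by linarith : a - b ≤ 0)]; linarith

/-- For `M = 2` i.i.d. Rayleigh fading (equivalently, `U = |h₁|²`, `V = |h₂|²` i.i.d.
Exponential(1)), the probability that the annulus ratio `r/R = |√U − √V|/(√U + √V)`
exceeds `1/3` equals `2/5`. -/
theorem ce_ratio_exceeds_third {Ω : Type*} [MeasurableSpace Ω] (ℙ : Measure Ω)
    [IsProbabilityMeasure ℙ] (U V : Ω → ℝ) (hUm : Measurable U) (hVm : Measurable V)
    (hindep : ProbabilityTheory.IndepFun U V ℙ)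
    (hU : ℙ.map U = volume.withDensity
      (fun t => ENNReal.ofReal (if 0 ≤ t then Real.exp (-t) else 0)))
    (hV : ℙ.map V = volume.withDensity
      (fun t => ENNReal.ofReal (if 0 ≤ t then Real.exp (-t) else 0))) :
    ℙ {ω | 1 / 3 <
        |Real.sqrt (U ω) - Real.sqrt (V ω)| / (Real.sqrt (U ω) + Real.sqrt (V ω))}
      = ENNReal.ofReal (2 / 5) := by
  have hU' : ℙ.map U = expM := hU
  have hV' : ℙ.map V = expM := hV
  have hUneg : ℙ {ω | U ω < 0} = 0 := by
    have : {ω | U ω < 0} = U ⁻¹' Set.Iio 0 := rfl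
    rw [this, ← Measure.map_apply hUm measurableSet_Iio, hU', expM_Iio_zero]
  have hVneg : ℙ {ω | V ω < 0} = 0 := by
    have : {ω | V ω < 0} = V ⁻¹' Set.Iio 0 := rfl
    rw [this, ← Measure.map_apply hVm measurableSet_Iio, hV', expM_Iio_zero]
  have hnn : ∀ᵐ ω ∂ℙ, 0 ≤ U ω ∧ 0 ≤ V ω := by
    have h1 : ∀ᵐ ω ∂ℙ, 0 ≤ U ω := by
      rw [ae_iff]; simpa only [not_le] using hUneg
    have h2 : ∀ᵐ ω ∂ℙ, 0 ≤ V ω := by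
      rw [ae_iff]; simpa only [not_le] using hVneg
    exact h1.and h2
  have hEq : {ω | 1 / 3 <
        |Real.sqrt (U ω) - Real.sqrt (V ω)| / (Real.sqrt (U ω) + Real.sqrt (V ω))}
      =ᵐ[ℙ] (({ω | 4 * V ω < U ω} ∪ {ω | 4 * U ω < V ω} : Set Ω)) := by
    rw [Filter.eventuallyEq_set]
    filter_upwards [hnn] with ω hω
    simp only [Set.mem_setOf_eq, Set.mem_union]
    exact ratio_iff hω.1 hω.2
  rw [measure_congr hEq]
  have hdisj : ℙ ({ω | 4 * V ω < U ω} ∩ {ω | 4 * U ω < V ω}) = 0 := by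
    refine measure_mono_null (fun ω hω => ?_) hUneg
    obtain ⟨h1, h2⟩ := hω
    simp only [Set.mem_setOf_eq] at h1 h2 ⊢
    linarith
  rw [measure_union₀ ((measurableSet_lt (hUm.const_mul 4) hVm).nullMeasurableSet) hdisj]
  rw [aux_prob ℙ V U hVm hUm hindep.symm hV' hU',
    aux_prob ℙ U V hUm hVm hindep hU' hV',
    ← ENNReal.ofReal_add (by norm_num) (by norm_num)]
  norm_num
end

section
/- For fixed radii 0 < ρ_2 < ρ_1 and fixed phase offsets, swapping the point counts between two rings (assigning the larger point count to the outer ring) does not decrease the minimum Euclidean distance of the two-ring APSK constellation. Consequently, in the optimal N-point two-ring APSK constellation maximizing the MED, the number of points on the inner ring satisfies N_2 ≤ N/2. -/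
open Real

lemma dist_pts (r ρ a b : ℝ) :
    dist ((r:ℂ) * Complex.exp ((a:ℂ) * Complex.I)) ((ρ:ℂ) * Complex.exp ((b:ℂ) * Complex.I))
      = Real.sqrt (r^2 + ρ^2 - 2*r*ρ*Real.cos (a-b)) := by
  rw [Complex.dist_eq, Complex.norm_def, Complex.normSq_apply]
  congr 1
  rw [Complex.exp_mul_I, Complex.exp_mul_I, ← Complex.ofReal_cos, ← Complex.ofReal_sin,
    ← Complex.ofReal_cos, ← Complex.ofReal_sin]
  simp only [Complex.sub_re, Complex.sub_im, Complex.mul_re, Complex.mul_im,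
    Complex.add_re, Complex.add_im, Complex.ofReal_re, Complex.ofReal_im,
    Complex.I_re, Complex.I_im, Real.cos_sub]
  ring_nf
  nlinarith [Real.sin_sq_add_cos_sq a, Real.sin_sq_add_cos_sq b]

lemma cos_lt_one' {x : ℝ} (h0 : 0 < x) (hx : x ≤ π) : Real.cos x < 1 := by
  have := Real.cos_lt_cos_of_nonneg_of_le_pi le_rfl hx h0
  simpa using this

lemma cos_gap_nat' {n j : ℕ} (hn : 2 ≤ n) (h1 : 1 ≤ j) (h2 : 2*j ≤ n) :
    Real.cos (2*π*j/n) ≤ Real.cos (2*π/n) := by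
  have hπ := Real.pi_pos
  have hn0 : (0:ℝ) < n := by positivity
  have hj1 : (1:ℝ) ≤ j := by exact_mod_cast h1
  have hjn : (2*j:ℝ) ≤ n := by exact_mod_cast h2
  apply Real.cos_le_cos_of_nonneg_of_le_pi (by positivity)
  · rw [div_le_iff₀ hn0]
    nlinarith [mul_le_mul_of_nonneg_left hjn Real.pi_pos.le]
  · rw [div_le_div_iff₀ hn0 hn0]
    have h2' : 2*π ≤ 2*π*(j:ℝ) := by nlinarith
    nlinarith [mul_le_mul_of_nonneg_right h2' hn0.le]

lemma cos_gap_nat {n j : ℕ} (hn : 2 ≤ n) (h1 : 1 ≤ j) (h2 : j ≤ n - 1) :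
    Real.cos (2*π*j/n) ≤ Real.cos (2*π/n) := by
  by_cases hc : 2*j ≤ n
  · exact cos_gap_nat' hn h1 hc
  · push_neg at hc
    have hj : j ≤ n := by omega
    have key : 2*π*(j:ℝ)/n = 2*π - 2*π*((n-j:ℕ):ℝ)/n := by
      rw [Nat.cast_sub hj]
      have : (n:ℝ) ≠ 0 := by positivity
      field_simp
      ring
    rw [key, Real.cos_two_pi_sub]
    exact cos_gap_nat' hn (by omega) (by omega)

lemma cos_gap {n : ℕ} (k l : Fin n) (hkl : (k:ℕ) ≠ (l:ℕ)) :
    Real.cos (2*π*(k:ℕ)/n - 2*π*(l:ℕ)/n) ≤ Real.cos (2*π/n) := by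
  have hn : 2 ≤ n := by omega
  wlog h : (l:ℕ) < (k:ℕ) generalizing k l
  · have := this l k hkl.symm (by omega)
    have e : 2*π*(k:ℕ)/n - 2*π*(l:ℕ)/n = -(2*π*(l:ℕ)/n - 2*π*(k:ℕ)/n) := by ring
    rw [e, Real.cos_neg]; exact this
  · have e : 2*π*(k:ℕ)/n - 2*π*(l:ℕ)/n = 2*π*(((k:ℕ)-(l:ℕ) : ℕ):ℝ)/n := by
      rw [Nat.cast_sub h.le]; ring
    rw [e]
    exact cos_gap_nat hn (by omega) (by omega)


/-- The ring of `n` uniformly spaced points of radius `ρ` and phase offset `ω`. -/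
def ring (ρ ω : ℝ) (n : ℕ) : Set ℂ :=
  {z : ℂ | ∃ k : Fin n, z = (ρ : ℂ) * Complex.exp (((2 * π * (k : ℕ) / n + ω : ℝ) : ℂ) * Complex.I)}

/-- Minimum Euclidean distance of a constellation. -/
noncomputable def med (S : Set ℂ) : ℝ :=
  sInf {d : ℝ | ∃ s ∈ S, ∃ t ∈ S, s ≠ t ∧ d = dist s t}

lemma key (N N2 : ℕ) (ρ ω : ℝ) (hρ0 : 0 < ρ) (hρ1 : ρ ≤ 1)
    (hN2 : N < 2 * N2) (hN2N : N2 < N) :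
    med (ring 1 0 (N - N2) ∪ ring ρ ω N2) ≤
      med (ring 1 0 N2 ∪ ring ρ (2 * π - ω) (N - N2)) := by
  have hπ := Real.pi_pos
  set m := N - N2 with hm
  have hm1 : 1 ≤ m := by omega
  have hmN2 : m < N2 := by omega
  have hN2two : 2 ≤ N2 := by omega
  have hN20 : (0:ℝ) < N2 := by positivity
  have hm0 : (0:ℝ) < m := by positivity
  have bddA : BddBelow {d : ℝ | ∃ s ∈ ring 1 0 m ∪ ring ρ ω N2, ∃ t ∈ ring 1 0 m ∪ ring ρ ω N2,
      s ≠ t ∧ d = dist s t} := by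
    refine ⟨0, ?_⟩
    rintro d ⟨s, _, t, _, _, rfl⟩
    exact dist_nonneg
  have hpileπ : 2*π/(N2:ℝ) ≤ π := by
    rw [div_le_iff₀ hN20]
    have : (2:ℝ) ≤ N2 := by exact_mod_cast hN2two
    nlinarith
  have hcosN2 : Real.cos (2*π/N2) < 1 := cos_lt_one' (by positivity) hpileπ
  have hBne : Set.Nonempty {d : ℝ | ∃ s ∈ ring 1 0 N2 ∪ ring ρ (2*π-ω) m,
      ∃ t ∈ ring 1 0 N2 ∪ ring ρ (2*π-ω) m, s ≠ t ∧ d = dist s t} := by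
    refine ⟨_, ((1:ℝ):ℂ) * Complex.exp (((2*π*(((⟨0, by omega⟩ : Fin N2)):ℕ)/N2 + 0 : ℝ):ℂ) * Complex.I),
      Or.inl ⟨_, rfl⟩, ((1:ℝ):ℂ) * Complex.exp (((2*π*(((⟨1, by omega⟩ : Fin N2)):ℕ)/N2 + 0 : ℝ):ℂ) * Complex.I),
      Or.inl ⟨_, rfl⟩, ?_, rfl⟩
    rw [← dist_pos, dist_pts, Real.sqrt_pos]
    have e : (2*π*(((⟨0, by omega⟩ : Fin N2)):ℕ)/N2 + 0) - (2*π*(((⟨1, by omega⟩ : Fin N2)):ℕ)/N2 + 0)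
        = -(2*π/N2) := by push_cast; ring
    rw [e, Real.cos_neg]
    nlinarith
  unfold med
  apply le_csInf hBne
  rintro d ⟨s, hs, t, ht, hst, rfl⟩
  have hρsq : ρ^2 ≤ 1 := by nlinarith
  rcases hs with ⟨k, rfl⟩ | ⟨k, rfl⟩ <;> rcases ht with ⟨l, rfl⟩ | ⟨l, rfl⟩
  · -- outer-outer
    have hpos := dist_pos.mpr hst
    rw [dist_pts, Real.sqrt_pos] at hpos
    refine le_trans (csInf_le bddA ⟨(ρ:ℂ) * Complex.exp (((2*π*(k:ℕ)/N2 + ω : ℝ):ℂ) * Complex.I),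
      Or.inr ⟨k, rfl⟩, (ρ:ℂ) * Complex.exp (((2*π*(l:ℕ)/N2 + ω : ℝ):ℂ) * Complex.I),
      Or.inr ⟨l, rfl⟩, ?_, rfl⟩) ?_
    · rw [← dist_pos, dist_pts, Real.sqrt_pos]
      have e : (2*π*(k:ℕ)/N2 + ω) - (2*π*(l:ℕ)/N2 + ω)
          = (2*π*(k:ℕ)/N2 + 0) - (2*π*(l:ℕ)/N2 + 0) := by ring
      rw [e]
      nlinarith [mul_pos (mul_pos hρ0 hρ0) hpos]
    · rw [dist_pts, dist_pts]
      apply Real.sqrt_le_sqrt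
      have e : (2*π*(k:ℕ)/N2 + ω) - (2*π*(l:ℕ)/N2 + ω)
          = (2*π*(k:ℕ)/N2 + 0) - (2*π*(l:ℕ)/N2 + 0) := by ring
      rw [e]
      nlinarith [mul_nonneg (sub_nonneg.mpr hρsq) hpos.le]
  · -- outer-inner (mixed)
    have hpos := dist_pos.mpr hst
    have heq : dist (((1:ℝ):ℂ) * Complex.exp (((2*π*(l:ℕ)/m + 0 : ℝ):ℂ) * Complex.I))
        ((ρ:ℂ) * Complex.exp (((2*π*(k:ℕ)/N2 + ω : ℝ):ℂ) * Complex.I))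
        = dist (((1:ℝ):ℂ) * Complex.exp (((2*π*(k:ℕ)/N2 + 0 : ℝ):ℂ) * Complex.I))
          ((ρ:ℂ) * Complex.exp (((2*π*(l:ℕ)/m + (2*π-ω) : ℝ):ℂ) * Complex.I)) := by
      rw [dist_pts, dist_pts]
      have e : (2*π*(l:ℕ)/m + 0) - (2*π*(k:ℕ)/N2 + ω)
          = -(((2*π*(k:ℕ)/N2 + 0) - (2*π*(l:ℕ)/m + (2*π-ω))) + 2*π) := by ring
      rw [e, Real.cos_neg, Real.cos_add_two_pi]
    refine le_trans (csInf_le bddA ⟨_, Or.inl ⟨l, rfl⟩, _, Or.inr ⟨k, rfl⟩, ?_, rfl⟩) ?_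
    · rw [← dist_pos, heq]
      exact hpos
    · rw [heq]
  · -- inner-outer (mixed, symmetric)
    have hpos := dist_pos.mpr hst
    have heq : dist (((1:ℝ):ℂ) * Complex.exp (((2*π*(k:ℕ)/m + 0 : ℝ):ℂ) * Complex.I))
        ((ρ:ℂ) * Complex.exp (((2*π*(l:ℕ)/N2 + ω : ℝ):ℂ) * Complex.I))
        = dist (((1:ℝ):ℂ) * Complex.exp (((2*π*(l:ℕ)/N2 + 0 : ℝ):ℂ) * Complex.I))
          ((ρ:ℂ) * Complex.exp (((2*π*(k:ℕ)/m + (2*π-ω) : ℝ):ℂ) * Complex.I)) := by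
      rw [dist_pts, dist_pts]
      have e : (2*π*(k:ℕ)/m + 0) - (2*π*(l:ℕ)/N2 + ω)
          = -(((2*π*(l:ℕ)/N2 + 0) - (2*π*(k:ℕ)/m + (2*π-ω))) + 2*π) := by ring
      rw [e, Real.cos_neg, Real.cos_add_two_pi]
    rw [dist_comm] at hpos ⊢
    refine le_trans (csInf_le bddA ⟨_, Or.inl ⟨k, rfl⟩, _, Or.inr ⟨l, rfl⟩, ?_, rfl⟩) ?_
    · rw [← dist_pos, heq]
      exact hpos
    · rw [heq]
  · -- inner-inner
    have hkl : (k:ℕ) ≠ (l:ℕ) := by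
      intro h
      exact hst (by rw [Fin.ext h])
    have hm2 : 2 ≤ m := by
      have := k.isLt; have := l.isLt; omega
    have hpos := dist_pos.mpr hst
    rw [dist_pts, Real.sqrt_pos] at hpos
    have hchain : Real.cos ((2*π*(k:ℕ)/m + (2*π-ω)) - (2*π*(l:ℕ)/m + (2*π-ω)))
        ≤ Real.cos (2*π/N2) := by
      have e : (2*π*(k:ℕ)/m + (2*π-ω)) - (2*π*(l:ℕ)/m + (2*π-ω))
          = 2*π*(k:ℕ)/m - 2*π*(l:ℕ)/m := by ring
      rw [e]
      refine le_trans (cos_gap k l hkl) ?_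
      apply Real.cos_le_cos_of_nonneg_of_le_pi (by positivity)
      · rw [div_le_iff₀ hm0]
        have : (2:ℝ) ≤ m := by exact_mod_cast hm2
        nlinarith
      · apply div_le_div_of_nonneg_left (by positivity) hm0
        exact_mod_cast hmN2.le
    refine le_trans (csInf_le bddA
      ⟨(ρ:ℂ) * Complex.exp (((2*π*(((⟨0, by omega⟩ : Fin N2)):ℕ)/N2 + ω : ℝ):ℂ) * Complex.I),
      Or.inr ⟨_, rfl⟩, (ρ:ℂ) * Complex.exp (((2*π*(((⟨1, by omega⟩ : Fin N2)):ℕ)/N2 + ω : ℝ):ℂ) * Complex.I),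
      Or.inr ⟨_, rfl⟩, ?_, rfl⟩) ?_
    · rw [← dist_pos, dist_pts, Real.sqrt_pos]
      have e : (2*π*(((⟨0, by omega⟩ : Fin N2)):ℕ)/N2 + ω) - (2*π*(((⟨1, by omega⟩ : Fin N2)):ℕ)/N2 + ω)
          = -(2*π/N2) := by push_cast; ring
      rw [e, Real.cos_neg]
      nlinarith [mul_pos (mul_pos hρ0 hρ0) (show (0:ℝ) < 2 - 2*Real.cos (2*π/N2) by linarith)]
    · rw [dist_pts, dist_pts]
      apply Real.sqrt_le_sqrt
      have e : (2*π*(((⟨0, by omega⟩ : Fin N2)):ℕ)/N2 + ω) - (2*π*(((⟨1, by omega⟩ : Fin N2)):ℕ)/N2 + ω)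
          = -(2*π/N2) := by push_cast; ring
      rw [e, Real.cos_neg]
      nlinarith [mul_nonneg (mul_pos hρ0 hρ0).le (sub_nonneg.mpr hchain)]

/-- Swapping the point counts of a two-ring APSK constellation so that the larger count
is on the outer ring does not decrease the MED; consequently an optimal `N`-point
two-ring APSK constellation can be chosen with at most `N/2` points on the inner ring. -/
theorem swap_counts_med (N N2 : ℕ) (ρ2 ω2 : ℝ) (hρ0 : 0 < ρ2) (hρ1 : ρ2 < 1)
    (hN2 : N < 2 * N2) (hN2N : N2 < N) :
    med (ring 1 0 (N - N2) ∪ ring ρ2 ω2 N2) ≤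
      med (ring 1 0 N2 ∪ ring ρ2 (2 * π - ω2) (N - N2)) ∧
    ∀ M2 : ℕ, ∀ ω ρ : ℝ, 0 < ρ → ρ ≤ 1 → 0 < M2 → M2 < N →
      ∃ M2' : ℕ, ∃ ω' ρ' : ℝ, 0 < M2' ∧ 2 * M2' ≤ N ∧ 0 < ρ' ∧ ρ' ≤ 1 ∧
        med (ring 1 0 (N - M2) ∪ ring ρ ω M2) ≤
          med (ring 1 0 (N - M2') ∪ ring ρ' ω' M2') := by
  constructor
  · exact key N N2 ρ2 ω2 hρ0 hρ1.le hN2 hN2N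
  · intro M2 ω ρ hρ0' hρ1' hM2 hM2N
    by_cases h : 2*M2 ≤ N
    · exact ⟨M2, ω, ρ, hM2, h, hρ0', hρ1', le_rfl⟩
    · push_neg at h
      refine ⟨N - M2, 2*π - ω, ρ, by omega, by omega, hρ0', hρ1', ?_⟩
      have e : N - (N - M2) = M2 := by omega
      rw [e]
      exact key N M2 ρ ω hρ0' hρ1' h hM2N
end

section
/- For N_1 ≥ 1 and N_2 ≥ 1 with gcd structure arbitrary, the optimal value C* of the problem min_{ω∈[0,2π)} max_{m,n} cos(2πn/N_2 + ω − 2πm/N_1) satisfies cos(π/N_1) ≤ C* < 1. -/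
open Real

private lemma cos_ge_of_abs_le {t a : ℝ} (ha : a ≤ π) (h : |t| ≤ a) :
    Real.cos a ≤ Real.cos t := by
  rw [← Real.cos_abs t]
  exact Real.cos_le_cos_of_nonneg_of_le_pi (abs_nonneg t) ha h

private lemma Vfin (N1 N2 : ℕ) (ω : ℝ) :
    {v : ℝ | ∃ m < N1, ∃ n < N2,
        v = Real.cos (2 * π * n / N2 + ω - 2 * π * m / N1)}.Finite := by
  apply Set.Finite.subset (Set.Finite.image
    (f := fun p : ℕ × ℕ => Real.cos (2 * π * p.2 / N2 + ω - 2 * π * p.1 / N1))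
    ((Set.finite_Iio N1).prod (Set.finite_Iio N2)))
  rintro v ⟨m, hm, n, hn, rfl⟩
  exact ⟨(m, n), ⟨hm, hn⟩, rfl⟩

private lemma Vbdd (N1 N2 : ℕ) (ω : ℝ) :
    BddAbove {v : ℝ | ∃ m < N1, ∃ n < N2,
        v = Real.cos (2 * π * n / N2 + ω - 2 * π * m / N1)} :=
  (Vfin N1 N2 ω).bddAbove

/-- The optimal value `C*` of `min_{ω ∈ [0,2π)} max_{m,n} cos(2πn/N₂ + ω − 2πm/N₁)`
satisfies `cos(π/N₁) ≤ C* < 1`. -/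
theorem optimal_cosine_bounds (N1 N2 : ℕ) (hN1 : 1 ≤ N1) (hN2 : 1 ≤ N2) (Cstar : ℝ)
    (hC : IsLeast {c : ℝ | ∃ ω ∈ Set.Ico (0 : ℝ) (2 * π),
        c = sSup {v : ℝ | ∃ m < N1, ∃ n < N2,
          v = Real.cos (2 * π * n / N2 + ω - 2 * π * m / N1)}} Cstar) :
    Real.cos (π / N1) ≤ Cstar ∧ Cstar < 1 := by
  obtain ⟨⟨ω, hω, hCeq⟩, hlb⟩ := hC
  have hπ := Real.pi_pos
  have h1R : (0:ℝ) < N1 := by exact_mod_cast hN1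
  have h2R : (0:ℝ) < N2 := by exact_mod_cast hN2
  have h1ne : (N1:ℝ) ≠ 0 := ne_of_gt h1R
  have h2ne : (N2:ℝ) ≠ 0 := ne_of_gt h2R
  have h1one : (1:ℝ) ≤ N1 := by exact_mod_cast hN1
  have h2one : (1:ℝ) ≤ N2 := by exact_mod_cast hN2
  have hπN1 : π / N1 ≤ π := div_le_self hπ.le h1one
  constructor
  · -- lower bound
    rw [hCeq]
    set x := ω * N1 / (2 * π) with hx
    have hωeq : ω = 2 * π * x / N1 := by rw [hx]; field_simp
    set k : ℤ := round x with hk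
    have habs : |x - (k:ℝ)| ≤ 1/2 := abs_sub_round x
    have hx0 : 0 ≤ x := div_nonneg (mul_nonneg hω.1 h1R.le) (by positivity)
    have hxlt : x < N1 := by
      rw [hx, div_lt_iff₀ (by positivity)]
      nlinarith [hω.2]
    have hk0 : 0 ≤ k := by
      have h' : (-1:ℝ) < k := by
        have := abs_le.mp habs
        linarith
      have h'' : (-1:ℤ) < k := by exact_mod_cast h'
      omega
    by_cases hkN : k < (N1:ℤ)
    · -- use m = k.toNat, n = 0
      set m : ℕ := k.toNat with hm
      have hmc : (m:ℝ) = (k:ℝ) := by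
        rw [hm]
        exact_mod_cast Int.toNat_of_nonneg hk0
      have hmN : m < N1 := by omega
      refine le_trans ?_ (le_csSup (Vbdd N1 N2 ω) ⟨m, hmN, 0, hN2, rfl⟩)
      apply cos_ge_of_abs_le hπN1
      have ht : 2 * π * (0:ℕ) / N2 + ω - 2 * π * m / N1 = 2 * π / N1 * (x - k) := by
        rw [hωeq, hmc]; push_cast; field_simp; ring
      rw [ht, abs_mul, abs_of_pos (by positivity : (0:ℝ) < 2 * π / N1)]
      calc 2 * π / N1 * |x - k| ≤ 2 * π / N1 * (1/2) := by
            apply mul_le_mul_of_nonneg_left habs (by positivity)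
        _ = π / N1 := by ring
    · -- use m = 0, n = 0; note cos ω = cos (ω - 2π)
      have hxge : (N1:ℝ) - 1/2 ≤ x := by
        have := abs_le.mp habs
        have hkN' : (N1:ℝ) ≤ k := by exact_mod_cast not_lt.mp hkN
        linarith
      refine le_trans ?_ (le_csSup (Vbdd N1 N2 ω) ⟨0, hN1, 0, hN2, rfl⟩)
      have hco : Real.cos (2 * π * (0:ℕ) / N2 + ω - 2 * π * (0:ℕ) / N1)
          = Real.cos (ω - 2 * π) := by
        push_cast
        rw [show 2 * π * 0 / N2 + ω - 2 * π * 0 / N1 = ω by ring, ← Real.cos_sub_two_pi ω]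
      rw [hco]
      apply cos_ge_of_abs_le hπN1
      have ht : ω - 2 * π = 2 * π / N1 * (x - N1) := by
        rw [hωeq]; field_simp
      rw [ht, abs_mul, abs_of_pos (by positivity : (0:ℝ) < 2 * π / N1)]
      have habs2 : |x - (N1:ℝ)| ≤ 1/2 := abs_le.mpr ⟨by linarith, by linarith⟩
      calc 2 * π / N1 * |x - N1| ≤ 2 * π / N1 * (1/2) := by
            apply mul_le_mul_of_nonneg_left habs2 (by positivity)
        _ = π / N1 := by ring
  · -- upper bound: choose ω₀ = π / (N1 N2)
    set ω0 : ℝ := π / (N1 * N2) with hω0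
    have hmem : ω0 ∈ Set.Ico (0:ℝ) (2 * π) := by
      constructor
      · positivity
      · rw [hω0, div_lt_iff₀ (by positivity)]
        nlinarith [mul_le_mul h1one h2one (by norm_num : (0:ℝ) ≤ 1) h1R.le]
    have hle : Cstar ≤ sSup {v : ℝ | ∃ m < N1, ∃ n < N2,
        v = Real.cos (2 * π * n / N2 + ω0 - 2 * π * m / N1)} :=
      hlb ⟨ω0, hmem, rfl⟩
    have hne : {v : ℝ | ∃ m < N1, ∃ n < N2,
        v = Real.cos (2 * π * n / N2 + ω0 - 2 * π * m / N1)}.Nonempty :=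
      ⟨_, 0, hN1, 0, hN2, rfl⟩
    obtain ⟨m, hm, n, hn, heq⟩ := hne.csSup_mem (Vfin N1 N2 ω0)
    refine lt_of_le_of_lt hle ?_
    rw [heq]
    refine lt_of_le_of_ne (Real.cos_le_one _) ?_
    intro hcos
    obtain ⟨j, hj⟩ := (Real.cos_eq_one_iff _).mp hcos
    have h3 : π * ((j:ℝ) * (2 * N1 * N2)) = π * (2*n*N1 + 1 - 2*m*N2) := by
      have e : (2 * π * n / N2 + ω0 - 2 * π * m / N1) * (N1 * N2)
          = π * (2*n*N1 + 1 - 2*m*N2) := by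
        rw [hω0]; field_simp
      calc π * ((j:ℝ) * (2 * N1 * N2)) = (j:ℝ) * (2 * π) * (N1 * N2) := by ring
        _ = _ := by rw [hj, e]
    have key : (j:ℝ) * (2 * N1 * N2) = 2*n*N1 + 1 - 2*m*N2 :=
      mul_left_cancel₀ (ne_of_gt hπ) h3
    have keyZ : (j * (2 * N1 * N2) : ℤ) = 2*n*N1 + 1 - 2*m*N2 := by exact_mod_cast key
    have hdvd : (2:ℤ) ∣ 1 :=
      ⟨j * (N1 * N2) - (n:ℤ) * N1 + (m:ℤ) * N2, by linear_combination -keyZ⟩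
    norm_num at hdvd
end
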